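/- arXiv:2108.09024 — 4 statements merged into one kernel-verified Lean document; each statement's English description precedes it below -/
import Mathlib

section
/- (Derivative of σ₀, the unnumbered lemma in Section 4.4.) Let V = β₀ + β₁·t and W = γ₀ + γ₁·t be linear polynomials in 𝕜[t], where 𝕜 is a field of characteristic p. Then the formal derivative of σ₀(t) := Σ_{i=1}^{p−1} V^i·W^{p−i} satisfies σ₀′(t) = (β₀γ₁ − β₁γ₀)·(V − W)^{p−2}. (In the paper's notation this reads σ₀′(t) = −π^{1/p}(V−W)^{p−2} with π^{1/p} = β₁γ₀ − β₀γ₁.) -/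
/-!
In characteristic `p` the geometric sum `∑_{i<p} x^i y^(p-1-i)`, multiplied by `x - y`, is
`x^p - y^p = (x - y)^p`; hence it equals `(x - y)^(p-1)`, and so
`σ₀ = W (V - W)^(p-1) - W^p`. Differentiating, `(W^p)' = 0` and `p - 1 = -1` leave
`σ₀' = (V W' - W V') (V - W)^(p-2)`, and for linear `V`, `W` the bracket is `β₀γ₁ - β₁γ₀`.
-/

open Polynomial Finset

section CharP

variable {R : Type*} [CommRing R] {p : ℕ} [Fact p.Prime] [CharP R p]

theorem geom_sum₂_eq_sub_pow_pred (x y : R) :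
    ∑ i ∈ range p, x ^ i * y ^ (p - 1 - i) = (x - y) ^ (p - 1) := by
  have hp := (Fact.out : p.Prime).one_lt.le
  suffices h : ∑ i ∈ range p, X ^ i * C y ^ (p - 1 - i) = (X - C y) ^ (p - 1) by
    simpa [eval_finsetSum] using congrArg (eval x) h
  -- `X - C y` is monic, hence cancellable even though `R` need not be a domain.
  refine (monic_X_sub_C y).isRegular.right ?_
  simp only
  rw [geom_sum₂_mul, ← pow_succ, Nat.sub_add_cancel hp, sub_pow_char]

theorem sum_Ioo_pow_mul_pow_eq (x y : R) :
    ∑ i ∈ Ioo 0 p, x ^ i * y ^ (p - i) = y * (x - y) ^ (p - 1) - y ^ p := by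
  have hp := (Fact.out : p.Prime).pos
  rw [← geom_sum₂_eq_sub_pow_pred, mul_sum, range_eq_Ico, sum_eq_sum_Ico_succ_bot hp,
    Ico_add_one_left_eq_Ioo, add_sub_right_comm, pow_zero, one_mul, Nat.sub_zero, ← pow_succ',
    Nat.sub_add_cancel hp, sub_self, zero_add]
  refine sum_congr rfl fun i hi => ?_
  rw [mul_left_comm, ← pow_succ', show p - 1 - i + 1 = p - i by grind]

theorem derivative_sum_Ioo_pow_mul_pow (f g : R[X]) :
    derivative (∑ i ∈ Ioo 0 p, f ^ i * g ^ (p - i)) =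
      (f * derivative g - g * derivative f) * (f - g) ^ (p - 2) := by
  have hp := (Fact.out : p.Prime).two_le
  have hpred : ((p - 1 : ℕ) : R[X]) = -1 := by
    rw [Nat.cast_sub (by omega), CharP.cast_eq_zero, Nat.cast_one, zero_sub]
  obtain ⟨n, rfl⟩ : ∃ n, p = n + 2 := ⟨p - 2, by omega⟩
  rw [sum_Ioo_pow_mul_pow_eq, derivative_sub, derivative_mul, derivative_pow, derivative_pow,
    C_eq_natCast, C_eq_natCast, hpred, CharP.cast_eq_zero, derivative_sub]
  simp only [Nat.add_sub_cancel, show n + 2 - 1 = n + 1 by omega, pow_succ]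
  ring

end CharP

/-- **derivative of σ₀, Section 4.4.**  Let `p` be a prime and `𝕜` a field of
characteristic `p`.  For linear polynomials `V = β₀ + β₁·t` and `W = γ₀ + γ₁·t` in `𝕜[t]`,
the formal derivative of `σ₀(t) = ∑_{i=1}^{p-1} V^i·W^{p-i}` equals
`(β₀γ₁ − β₁γ₀)·(V − W)^{p-2}`. -/
theorem derivative_sigma_zero
    (p : ℕ) (hp : p.Prime) (𝕜 : Type*) [Field 𝕜] [CharP 𝕜 p] (β₀ β₁ γ₀ γ₁ : 𝕜) :
    derivative (∑ i ∈ Ioo 0 p,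
        (C β₀ + C β₁ * X) ^ i * (C γ₀ + C γ₁ * X) ^ (p - i))
      = C (β₀ * γ₁ - β₁ * γ₀) * ((C β₀ + C β₁ * X) - (C γ₀ + C γ₁ * X)) ^ (p - 2) := by
  have : Fact p.Prime := ⟨hp⟩
  rw [derivative_sum_Ioo_pow_mul_pow]
  congr 1
  simp only [derivative_add, derivative_C, derivative_C_mul_X, zero_add, map_sub, map_mul]
  ring
end

section
/- (Corollary 2.6, 𝔸¹-connectedness of X through any number of points.) Let P₁, …, P_n be points of ℙ²(𝕜) not lying on the curve Δ_X; represent P_i by a nonzero vector (v₀^i, v₁^i, v₂^i) ∈ 𝕜³ with σ(v₀^i, v₁^i) − (v₂^i)^p ≠ 0. Then there exist polynomials f₀, f₁, f₂ ∈ 𝕜[t], not all constant, with σ(f₀, f₁) − f₂^p = 1, together with parameters t₁, …, t_n ∈ 𝕜 and nonzero scalars λ₁, …, λ_n ∈ 𝕜 such that (f₀(t_i), f₁(t_i), f₂(t_i)) = λ_i·(v₀^i, v₁^i, v₂^i) for each i. In other words, there is an 𝔸¹-curve in X∖Δ_X passing through the n given points. -/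
/-!
Rescale each `v i` so that `σ(w₀, w₁) − w₂ ^ p = 1`. Over a perfect field of characteristic `p`
every polynomial in `t ^ p` is a `p`-th power, so for any `F₀, F₁` the polynomials
`f₀ = F₀(t ^ p)`, `f₁ = F₁(t ^ p)` and `f₂ = (σ(F₀, F₁) − 1) ^ (1/p)(t)` satisfy
`σ(f₀, f₁) − f₂ ^ p = 1`. Choosing `F₀` nonconstant and `F₀, F₁` interpolating `w₀, w₁` at
distinct nodes `Tᵢ`, the curve passes through the rescaled points at `tᵢ = Tᵢ ^ (1/p)`: the first
two coordinates match by construction and the third because Frobenius is injective.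
-/

open Polynomial Finset

def sigmaForm {R : Type*} [CommSemiring R] (p : ℕ) (s : ℕ → R) (a b : R) : R :=
  ∑ k ∈ Ioo 0 p, s k * a ^ k * b ^ (p - k)

section SigmaForm

variable {R S : Type*} [CommSemiring R] [CommSemiring S] (p : ℕ) (s : ℕ → R)

theorem sigmaForm_mul_mul (c a b : R) :
    sigmaForm p s (c * a) (c * b) = c ^ p * sigmaForm p s a b := by
  rw [sigmaForm, sigmaForm, mul_sum]
  refine sum_congr rfl fun k hk => ?_
  rw [show c ^ p = c ^ k * c ^ (p - k) by
    rw [← pow_add, Nat.add_sub_cancel' (mem_Ioo.mp hk).2.le]]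
  ring

theorem map_sigmaForm (φ : R →+* S) (a b : R) :
    φ (sigmaForm p s a b) = sigmaForm p (φ ∘ s) (φ a) (φ b) := by
  simp [sigmaForm, map_sum]

end SigmaForm

section Polynomial

variable {R : Type*} [CommSemiring R] (p : ℕ) (s : ℕ → R)

theorem eval_sigmaForm_C (x : R) (f g : R[X]) :
    (sigmaForm p (C ∘ s) f g).eval x = sigmaForm p s (f.eval x) (g.eval x) := by
  simpa [Function.comp_def] using map_sigmaForm p (C ∘ s) (evalRingHom x) f g

theorem expand_sigmaForm_C (q : ℕ) (f g : R[X]) :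
    expand R q (sigmaForm p (C ∘ s) f g) = sigmaForm p (C ∘ s) (expand R q f) (expand R q g) := by
  simpa [Function.comp_def] using map_sigmaForm p (C ∘ s) (expand R q : R[X] →+* R[X]) f g

end Polynomial

theorem exists_sigmaForm_mul_sub_mul_pow_eq_one {K : Type*} [Field K] [IsAlgClosed K]
    {p : ℕ} (hp : 0 < p) (s : ℕ → K) {a b c : K} (h : sigmaForm p s a b - c ^ p ≠ 0) :
    ∃ lam ≠ 0, sigmaForm p s (lam * a) (lam * b) - (lam * c) ^ p = 1 := by
  obtain ⟨lam, hlam⟩ := IsAlgClosed.exists_pow_nat_eq (sigmaForm p s a b - c ^ p)⁻¹ hp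
  refine ⟨lam, ?_, ?_⟩
  · rintro rfl
    rw [zero_pow hp.ne', eq_comm, inv_eq_zero] at hlam
    exact h hlam
  · rw [sigmaForm_mul_mul, mul_pow, ← mul_sub, hlam, inv_mul_cancel₀ h]

theorem exists_natDegree_ne_zero_eval_eq {K ι : Type*} [Field K] [Fintype ι] {x : ι → K}
    (hx : Function.Injective x) (y : ι → K) :
    ∃ F : K[X], F.natDegree ≠ 0 ∧ ∀ i, F.eval (x i) = y i := by
  classical
  set G := Lagrange.interpolate univ x y
  set N := X ^ (G.natDegree + 1) * Lagrange.nodal univ x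
  have hN : G.natDegree < N.natDegree := by
    rw [natDegree_X_pow_mul (n := G.natDegree + 1) (Lagrange.nodal_monic.ne_zero)]
    omega
  refine ⟨G + N, ?_, fun i => ?_⟩
  · rw [natDegree_add_eq_right_of_natDegree_lt hN]
    omega
  · rw [eval_add, Lagrange.eval_interpolate_at_node y hx.injOn (mem_univ i), eval_mul,
      Lagrange.eval_nodal_at_node (mem_univ i), mul_zero, add_zero]

theorem exists_sigmaForm_expand_sub_pow_eq_one {K : Type*} [Field K] (p : ℕ) [ExpChar K p]
    [PerfectRing K p] (s : ℕ → K) (F₀ F₁ : K[X]) :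
    ∃ f₂ : K[X], sigmaForm p (C ∘ s) (expand K p F₀) (expand K p F₁) - f₂ ^ p = 1 ∧
      ∀ x, f₂.eval x ^ p = sigmaForm p s (F₀.eval (x ^ p)) (F₁.eval (x ^ p)) - 1 := by
  set G := sigmaForm p (C ∘ s) F₀ F₁ - 1
  refine ⟨G.map (frobeniusEquiv K p).symm, ?_, fun x => ?_⟩
  · rw [← polynomial_expand_eq, map_sub, map_one, expand_sigmaForm_C, sub_sub_cancel]
  · rw [← eval_pow, ← polynomial_expand_eq, expand_eval, eval_sub, eval_one, eval_sigmaForm_C]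

theorem A1_curve_through_n_points_general
    (p : ℕ) (hp : p.Prime) (𝕜 : Type*) [Field 𝕜] [IsAlgClosed 𝕜] [CharP 𝕜 p]
    (s : ℕ → 𝕜)
    (n : ℕ) (v : Fin n → Fin 3 → 𝕜)
    (hv : ∀ i, (∑ k ∈ Ioo 0 p, s k * v i 0 ^ k * v i 1 ^ (p - k)) - v i 2 ^ p ≠ 0) :
    ∃ f₀ f₁ f₂ : Polynomial 𝕜,
      ¬ (f₀.natDegree = 0 ∧ f₁.natDegree = 0 ∧ f₂.natDegree = 0) ∧
      (∑ k ∈ Ioo 0 p, C (s k) * f₀ ^ k * f₁ ^ (p - k)) - f₂ ^ p = 1 ∧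
      ∃ (t : Fin n → 𝕜) (lam : Fin n → 𝕜),
        ∀ i, lam i ≠ 0 ∧
          f₀.eval (t i) = lam i * v i 0 ∧
          f₁.eval (t i) = lam i * v i 1 ∧
          f₂.eval (t i) = lam i * v i 2 := by
  have : Fact p.Prime := ⟨hp⟩
  choose lam hlam0 hlam using fun i => exists_sigmaForm_mul_sub_mul_pow_eq_one hp.pos s (hv i)
  obtain ⟨T, hT⟩ : ∃ T : Fin n → 𝕜, Function.Injective T :=
    ⟨_, (Infinite.natEmbedding 𝕜).injective.comp Fin.val_injective⟩
  choose t ht using fun i => IsAlgClosed.exists_pow_nat_eq (T i) hp.pos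
  obtain ⟨F₀, hF₀, hF₀T⟩ := exists_natDegree_ne_zero_eval_eq hT fun i => lam i * v i 0
  obtain ⟨F₁, -, hF₁T⟩ := exists_natDegree_ne_zero_eval_eq hT fun i => lam i * v i 1
  obtain ⟨f₂, hf, hf₂⟩ := exists_sigmaForm_expand_sub_pow_eq_one p s F₀ F₁
  refine ⟨expand 𝕜 p F₀, expand 𝕜 p F₁, f₂, ?_, hf, t, lam, fun i => ⟨hlam0 i, ?_, ?_, ?_⟩⟩
  · exact fun h => mul_ne_zero hF₀ hp.ne_zero ((natDegree_expand p F₀).symm.trans h.1)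
  · rw [expand_eval, ht, hF₀T]
  · rw [expand_eval, ht, hF₁T]
  · refine injective_pow_p 𝕜 p ?_
    rw [hf₂, ht, hF₀T, hF₁T, ← hlam i, sub_sub_cancel]

/-- **Corollary 2.6, 𝔸¹-connectedness through any number of points.**
Let `p` be a prime, `𝕜` an algebraically closed field of characteristic `p`, and
`σ(A,B) = ∑_{i=1}^{p-1} σ_i A^i B^{p-i}` with `σ_1 = σ_{p-1} = 1`.  Given points
`P₁, …, P_n ∈ ℙ²(𝕜) ∖ Δ_X`, represented by nonzero vectors `v i` with
`σ(v i 0, v i 1) − (v i 2)^p ≠ 0`, there exist `f₀, f₁, f₂ ∈ 𝕜[t]`, not all constant,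
with `σ(f₀, f₁) − f₂^p = 1`, together with parameters `t_i ∈ 𝕜` and nonzero scalars
`λ_i ∈ 𝕜`, such that `(f₀(t_i), f₁(t_i), f₂(t_i)) = λ_i · v i` for each `i`. -/
theorem A1_curve_through_n_points
    (p : ℕ) (hp : p.Prime) (𝕜 : Type*) [Field 𝕜] [IsAlgClosed 𝕜] [CharP 𝕜 p]
    (s : ℕ → 𝕜) (hs1 : s 1 = 1) (hsp : s (p - 1) = 1)
    (n : ℕ) (v : Fin n → Fin 3 → 𝕜)
    (hv0 : ∀ i, v i ≠ 0)
    (hv : ∀ i, (∑ k ∈ Ioo 0 p, s k * v i 0 ^ k * v i 1 ^ (p - k)) - v i 2 ^ p ≠ 0) :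
    ∃ f₀ f₁ f₂ : Polynomial 𝕜,
      ¬ (f₀.natDegree = 0 ∧ f₁.natDegree = 0 ∧ f₂.natDegree = 0) ∧
      (∑ k ∈ Ioo 0 p, C (s k) * f₀ ^ k * f₁ ^ (p - k)) - f₂ ^ p = 1 ∧
      ∃ (t : Fin n → 𝕜) (lam : Fin n → 𝕜),
        ∀ i, lam i ≠ 0 ∧
          f₀.eval (t i) = lam i * v i 0 ∧
          f₁.eval (t i) = lam i * v i 1 ∧
          f₂.eval (t i) = lam i * v i 2 :=
  A1_curve_through_n_points_general p hp 𝕜 s n v hv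
end

section
/- (Tangent-line determinant identity from Section 4.4.) Let M, V, W ∈ 𝕜[t], set S(t) := σ^{1/p}(V,W), and define the parameterization x₀(t) = M·V^p, x₁(t) = M·W^p, x₂(t) = M·S − 1. Then in the polynomial ring 𝕜[t][X₀, X₁, X₂] one has the identity det [[X₀, X₁, X₂], [x₀(t), x₁(t), x₂(t)], [x₀′(t), x₁′(t), x₂′(t)]] = (M′ + M²·S′)·(W^p·X₀ − V^p·X₁). (In particular the Wronskian x₀x₁′ − x₀′x₁ vanishes, and wherever M′ + M²·S′ ≠ 0 the tangent line of the parameterized curve is W(t)^p·x₀ − V(t)^p·x₁ = 0, which passes through str = [0:0:1]; the cusps of the image are governed by the equation M′ + M²·S′ = 0.) -/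
/-! In characteristic `p` the `p`-th powers `V ^ p`, `W ^ p` have zero derivative, so the first
two coordinates of the curve and of its derivative are `M`, resp. `M'`, times the same vector
`(V ^ p, W ^ p)`; expanding the determinant along its first row then gives the identity. -/

open Finset Polynomial

theorem Polynomial.derivative_pow_char {R : Type*} [CommSemiring R] (p : ℕ) [CharP R p]
    (f : R[X]) : derivative (f ^ p) = 0 := by
  simp [derivative_pow]

theorem det_tangent_matrix_of_derivative_eq_zero {R : Type*} [CommRing R]
    (M A B S : R[X]) (hA : derivative A = 0) (hB : derivative B = 0) :
    Matrix.det
      !![(MvPolynomial.X 0 : MvPolynomial (Fin 3) R[X]), MvPolynomial.X 1, MvPolynomial.X 2;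
         MvPolynomial.C (M * A), MvPolynomial.C (M * B), MvPolynomial.C (M * S - 1);
         MvPolynomial.C (derivative (M * A)), MvPolynomial.C (derivative (M * B)),
           MvPolynomial.C (derivative (M * S - 1))]
      = MvPolynomial.C (derivative M + M ^ 2 * derivative S) *
          (MvPolynomial.C B * MvPolynomial.X 0 - MvPolynomial.C A * MvPolynomial.X 1) := by
  simp only [Matrix.det_fin_three, Matrix.of_apply, Matrix.cons_val', Matrix.cons_val_zero,
    Matrix.cons_val_one, Matrix.cons_val_two, Matrix.head_cons, Matrix.tail_cons,
    Matrix.head_fin_const, Matrix.empty_val', Matrix.cons_val_fin_one, derivative_mul,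
    derivative_one, hA, hB, map_add, map_mul, map_sub, map_one, map_pow, map_zero]
  ring

theorem tangent_line_determinant_identity_general
    (p : ℕ) (𝕜 : Type*) [Field 𝕜] [CharP 𝕜 p]
    (M V W : Polynomial 𝕜)
    (S x₀ x₁ x₂ : Polynomial 𝕜)
    (hx₀ : x₀ = M * V ^ p) (hx₁ : x₁ = M * W ^ p) (hx₂ : x₂ = M * S - 1) :
    Matrix.det
      !![(MvPolynomial.X 0 : MvPolynomial (Fin 3) (Polynomial 𝕜)),
           MvPolynomial.X 1, MvPolynomial.X 2;
         MvPolynomial.C x₀, MvPolynomial.C x₁, MvPolynomial.C x₂;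
         MvPolynomial.C (Polynomial.derivative x₀),
           MvPolynomial.C (Polynomial.derivative x₁),
           MvPolynomial.C (Polynomial.derivative x₂)]
      = MvPolynomial.C (Polynomial.derivative M + M ^ 2 * Polynomial.derivative S) *
          (MvPolynomial.C (W ^ p) * MvPolynomial.X 0 -
           MvPolynomial.C (V ^ p) * MvPolynomial.X 1) := by
  subst hx₀ hx₁ hx₂
  exact det_tangent_matrix_of_derivative_eq_zero M (V ^ p) (W ^ p) S
    (derivative_pow_char p V) (derivative_pow_char p W)

/-- **tangent-line determinant identity from Section 4.4.**
Let `p` be a prime and `𝕜` a (perfect) field of characteristic `p`, with `σ_i ∈ 𝕜` and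
`p`-th roots `τ i` (so `τ i ^ p = σ_i`).  Let `M, V, W ∈ 𝕜[t]`,
`S = σ^{1/p}(V,W) = ∑_{i=1}^{p-1} τ_i V^i W^{p-i}`, and set `x₀ = M·V^p`, `x₁ = M·W^p`,
`x₂ = M·S − 1`.  Then in `𝕜[t][X₀,X₁,X₂]`,
`det [[X₀,X₁,X₂],[x₀,x₁,x₂],[x₀′,x₁′,x₂′]] = (M′ + M²·S′)·(W^p·X₀ − V^p·X₁)`. -/
theorem tangent_line_determinant_identity
    (p : ℕ) (hp : p.Prime) (𝕜 : Type*) [Field 𝕜] [CharP 𝕜 p]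
    (s τ : ℕ → 𝕜) (hτ : ∀ i, τ i ^ p = s i)
    (M V W : Polynomial 𝕜)
    (S x₀ x₁ x₂ : Polynomial 𝕜)
    (hS : S = ∑ i ∈ Ioo 0 p, Polynomial.C (τ i) * V ^ i * W ^ (p - i))
    (hx₀ : x₀ = M * V ^ p) (hx₁ : x₁ = M * W ^ p) (hx₂ : x₂ = M * S - 1) :
    Matrix.det
      !![(MvPolynomial.X 0 : MvPolynomial (Fin 3) (Polynomial 𝕜)),
           MvPolynomial.X 1, MvPolynomial.X 2;
         MvPolynomial.C x₀, MvPolynomial.C x₁, MvPolynomial.C x₂;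
         MvPolynomial.C (Polynomial.derivative x₀),
           MvPolynomial.C (Polynomial.derivative x₁),
           MvPolynomial.C (Polynomial.derivative x₂)]
      = MvPolynomial.C (Polynomial.derivative M + M ^ 2 * Polynomial.derivative S) *
          (MvPolynomial.C (W ^ p) * MvPolynomial.X 0 -
           MvPolynomial.C (V ^ p) * MvPolynomial.X 1) :=
  tangent_line_determinant_identity_general p 𝕜 M V W S x₀ x₁ x₂ hx₀ hx₁ hx₂
end

section
/- (Δ_X is smooth if and only if p = 2.) The projective plane curve defined by F := σ(x₀,x₁) − x₂^p has a singular point over 𝕜 — that is, there exists (x₀,x₁,x₂) ∈ 𝕜³ ∖ {(0,0,0)} at which F and all three partial derivatives ∂_{x₀}F, ∂_{x₁}F, ∂_{x₂}F vanish — if and only if p ≥ 3. -/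
/-!
Dehomogenising at `x₁ = 1` turns `σ(x₀, x₁)` into `f(T) = σ(T, 1)`. In characteristic `p` the
partial `∂F/∂x₂ = -p x₂^(p-1)` vanishes identically, and Euler's relation
`x₀ ∂F/∂x₀ + x₁ ∂F/∂x₁ = p σ = 0` makes `∂F/∂x₁` vanish wherever `∂F/∂x₀` does. Hence for any
root `t` of `f'` and any `p`-th root `y` of `f(t)`, the point `(t : 1 : y)` is singular. Such a
root exists once `p ≥ 3`, because `f'` then has degree `p - 2 > 0` (its top coefficient is
`(p - 1) σ_{p-1} = -1`). For `p = 2`, `F = x₀x₁ - x₂²` is a smooth conic.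
-/

open MvPolynomial Finset

noncomputable def boundaryPoly {R : Type*} [CommRing R] (p : ℕ) (s : ℕ → R) :
    MvPolynomial (Fin 3) R :=
  (∑ i ∈ Ioo 0 p, C (s i) * X 0 ^ i * X 1 ^ (p - i)) - X 2 ^ p

def IsSingularPoint {ι R : Type*} [CommRing R] (F : MvPolynomial ι R) (v : ι → R) : Prop :=
  v ≠ 0 ∧ eval v F = 0 ∧ ∀ j, eval v (pderiv j F) = 0

/-- `σ(T, 1)`. -/
noncomputable def affineSigma {R : Type*} [CommRing R] (p : ℕ) (s : ℕ → R) : Polynomial R :=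
  ∑ i ∈ Ioo 0 p, Polynomial.C (s i) * Polynomial.X ^ i

theorem exists_isRoot_of_coeff_ne_zero {K : Type*} [Field K] [IsAlgClosed K] {f : Polynomial K}
    {n : ℕ} (hn : n ≠ 0) (hf : f.coeff n ≠ 0) : ∃ t, f.IsRoot t := by
  refine IsAlgClosed.exists_root f fun hdeg => hf ?_
  rw [Polynomial.eq_C_of_degree_eq_zero hdeg, Polynomial.coeff_C_of_ne_zero hn]

section CommRing

variable {R : Type*} [CommRing R] {p : ℕ} {s : ℕ → R}

theorem boundaryPoly_two : boundaryPoly 2 s = C (s 1) * X 0 * X 1 - X 2 ^ 2 := by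
  simp [boundaryPoly, show Ioo 0 2 = {1} from rfl]

theorem not_isSingularPoint_boundaryPoly_two [NoZeroDivisors R] (hs1 : s 1 = 1)
    (v : Fin 3 → R) : ¬IsSingularPoint (boundaryPoly 2 s) v := by
  rintro ⟨hv, hF, hD⟩
  have h0 : v 0 = 0 := by simpa [boundaryPoly_two, hs1] using hD 1
  have h1 : v 1 = 0 := by simpa [boundaryPoly_two, hs1] using hD 0
  have h2 : v 2 = 0 := by simpa [boundaryPoly_two, h0, h1] using hF
  exact hv (funext fun i => by fin_cases i <;> assumption)

theorem coeff_affineSigma (n : ℕ) :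
    (affineSigma p s).coeff n = if n ∈ Ioo 0 p then s n else 0 := by
  simp [affineSigma]

theorem eval_boundaryPoly (t y : R) :
    eval ![t, 1, y] (boundaryPoly p s) = (affineSigma p s).eval t - y ^ p := by
  simp [boundaryPoly, affineSigma, Polynomial.eval_finsetSum]

theorem eval_pderiv_zero_boundaryPoly (t y : R) :
    eval ![t, 1, y] (pderiv 0 (boundaryPoly p s)) = (affineSigma p s).derivative.eval t := by
  simp [boundaryPoly, affineSigma, Polynomial.eval_finsetSum, pderiv_X,
    Polynomial.derivative_X_pow]

theorem eval_pderiv_one_boundaryPoly [CharP R p] (t y : R) :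
    eval ![t, 1, y] (pderiv 1 (boundaryPoly p s)) =
      -(t * (affineSigma p s).derivative.eval t) := by
  have euler : ∀ i ∈ Ioo 0 p,
      s i * t ^ i * ((p - i : ℕ) : R) = -(t * (s i * (i * t ^ (i - 1)))) := by
    intro i hi
    obtain ⟨hi0, hip⟩ := mem_Ioo.1 hi
    obtain ⟨k, rfl⟩ : ∃ k, i = k + 1 := ⟨i - 1, by omega⟩
    rw [Nat.cast_sub hip.le, CharP.cast_eq_zero R p, Nat.add_sub_cancel]
    ring
  simpa [boundaryPoly, affineSigma, Polynomial.eval_finsetSum, pderiv_X,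
    Polynomial.derivative_X_pow, mul_sum] using sum_congr rfl euler

theorem pderiv_two_boundaryPoly [CharP R p] : pderiv 2 (boundaryPoly p s) = 0 := by
  simp [boundaryPoly, pderiv_X]

end CommRing

section IsAlgClosed

variable {K : Type*} [Field K] [IsAlgClosed K] {p : ℕ} [CharP K p] {s : ℕ → K}

theorem exists_isRoot_derivative_affineSigma (hp : 3 ≤ p) (hsp : s (p - 1) = 1) :
    ∃ t, (affineSigma p s).derivative.IsRoot t := by
  refine exists_isRoot_of_coeff_ne_zero (n := p - 2) (by omega) ?_
  have hchar : ((p - 2 : ℕ) : K) + 2 = 0 := by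
    have := CharP.cast_eq_zero K p
    rw [show p = p - 2 + 2 by omega] at this
    exact_mod_cast this
  have hcoeff : (affineSigma p s).derivative.coeff (p - 2) = -1 := by
    rw [Polynomial.coeff_derivative, coeff_affineSigma, if_pos (mem_Ioo.2 ⟨by omega, by omega⟩),
      show p - 2 + 1 = p - 1 by omega, hsp]
    linear_combination hchar
  simp [hcoeff]

theorem exists_isSingularPoint_boundaryPoly (hp : 3 ≤ p) (hsp : s (p - 1) = 1) :
    ∃ v, IsSingularPoint (boundaryPoly p s) v := by
  obtain ⟨t, ht⟩ := exists_isRoot_derivative_affineSigma hp hsp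
  obtain ⟨y, hy⟩ := IsAlgClosed.exists_pow_nat_eq ((affineSigma p s).eval t) (by omega : 0 < p)
  refine ⟨![t, 1, y], fun h => one_ne_zero (congrFun h 1), ?_, ?_⟩
  · rw [eval_boundaryPoly, hy, sub_self]
  · intro j
    match j with
    | 0 => rw [eval_pderiv_zero_boundaryPoly, ht.eq_zero]
    | 1 => rw [eval_pderiv_one_boundaryPoly, ht.eq_zero, mul_zero, neg_zero]
    | 2 => rw [pderiv_two_boundaryPoly, map_zero]

end IsAlgClosed

/-- **Δ_X is smooth iff p = 2.**  Let `p` be a prime, `𝕜` an algebraically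
closed field of characteristic `p`, and `σ(A,B) = ∑_{i=1}^{p-1} σ_i A^i B^{p-i}` with
`σ_1 = σ_{p-1} = 1`.  The projective plane curve `F = σ(x₀,x₁) − x₂^p` has a singular
point over `𝕜` — a nonzero `(x₀,x₁,x₂) ∈ 𝕜³` where `F` and all three partial derivatives
vanish — if and only if `p ≥ 3`. -/
theorem boundary_singular_iff_p_ge_three
    (p : ℕ) (hp : p.Prime) (𝕜 : Type*) [Field 𝕜] [IsAlgClosed 𝕜] [CharP 𝕜 p]
    (s : ℕ → 𝕜) (hs1 : s 1 = 1) (hsp : s (p - 1) = 1) :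
    (∃ v : Fin 3 → 𝕜, v ≠ 0 ∧
        eval v ((∑ i ∈ Ioo 0 p, (C (s i) : MvPolynomial (Fin 3) 𝕜) *
            X 0 ^ i * X 1 ^ (p - i)) - X 2 ^ p) = 0 ∧
        ∀ j : Fin 3,
          eval v (pderiv j ((∑ i ∈ Ioo 0 p, (C (s i) : MvPolynomial (Fin 3) 𝕜) *
              X 0 ^ i * X 1 ^ (p - i)) - X 2 ^ p)) = 0)
      ↔ 3 ≤ p := by
  change (∃ v, IsSingularPoint (boundaryPoly p s) v) ↔ 3 ≤ p
  refine ⟨fun ⟨v, hv⟩ => ?_, fun hp3 => exists_isSingularPoint_boundaryPoly hp3 hsp⟩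
  by_contra hp3
  obtain rfl : p = 2 := by have := hp.two_le; omega
  exact not_isSingularPoint_boundaryPoly_two hs1 v hv
end
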